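/- arXiv:1404.7700 — 4 statements merged into one kernel-verified Lean document; each statement's English description precedes it below -/
import Mathlib

section
/- Let G be a group and let w ∈ G satisfy w² = 1. Let g, h ∈ G satisfy w·g·w = g⁻¹ and w·h·w = h⁻¹. Put f = g·h and k = f⁻¹ · w · f · w, and suppose that k has finite odd order m. If f · k^((m+1)/2) = 1, then g·h = h·g. -/
/-! For odd `m` the element `k ^ ((m + 1) / 2)` is a square root of `k`, so the hypothesis
`f = (k ^ ((m + 1) / 2))⁻¹` gives `f * k = f⁻¹`. On the other hand `f * k = w * f * w`, which is
`g⁻¹ * h⁻¹` since conjugation by `w` inverts `g` and `h`. Hence `g⁻¹ * h⁻¹ = (g * h)⁻¹ = h⁻¹ * g⁻¹`. -/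

section

variable {G : Type*} [Group G]

theorem conj_mul_of_sq_eq_one {w : G} (hw : w ^ 2 = 1) (a b : G) :
    w * (a * b) * w = (w * a * w) * (w * b * w) := by
  rw [sq] at hw
  calc w * (a * b) * w = w * a * (w * w) * b * w := by rw [hw]; group
    _ = (w * a * w) * (w * b * w) := by group

theorem sq_pow_succ_div_two_of_pow_eq_one {k : G} {m : ℕ} (hm : Odd m) (hk : k ^ m = 1) :
    (k ^ ((m + 1) / 2)) ^ 2 = k := by
  obtain ⟨j, rfl⟩ := hm
  have hj : (2 * j + 1 + 1) / 2 * 2 = 2 * j + 1 + 1 := by omega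
  rw [← pow_mul, hj, pow_succ, hk, one_mul]

theorem mul_eq_inv_of_mul_pow_succ_div_two_eq_one {f k : G} {m : ℕ} (hm : Odd m)
    (hk : k ^ m = 1) (hz : f * k ^ ((m + 1) / 2) = 1) : f * k = f⁻¹ := by
  have hf : f = (k ^ ((m + 1) / 2))⁻¹ := eq_inv_of_mul_eq_one_left hz
  rw [hf, inv_inv, inv_mul_eq_iff_eq_mul, ← sq, sq_pow_succ_div_two_of_pow_eq_one hm hk]

end

/-- Let `w` be an element with `w² = 1` in a group `G`, let `g, h ∈ G` be inverted by
conjugation by `w`, set `f = g * h` and `k = f⁻¹ * w * f * w`, and suppose `k` has finite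
odd order `m`. If `f * k ^ ((m + 1) / 2) = 1` then `g` and `h` commute. -/
theorem zeta_trivial_implies_commute {G : Type*} [Group G] (w g h : G) (hw : w ^ 2 = 1)
    (hg : w * g * w = g⁻¹) (hh : w * h * w = h⁻¹) (m : ℕ) (hm : Odd m)
    (hk : orderOf ((g * h)⁻¹ * w * (g * h) * w) = m)
    (hz : (g * h) * ((g * h)⁻¹ * w * (g * h) * w) ^ ((m + 1) / 2) = 1) :
    g * h = h * g := by
  set k := (g * h)⁻¹ * w * (g * h) * w with hk_def
  have hkm : k ^ m = 1 := hk ▸ pow_orderOf_eq_one k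
  have hconj : w * (g * h) * w = g⁻¹ * h⁻¹ := by rw [conj_mul_of_sq_eq_one hw, hg, hh]
  have hfk : g * h * k = w * (g * h) * w := by rw [hk_def]; group
  have hinv : g⁻¹ * h⁻¹ = (g * h)⁻¹ := by
    rw [← hconj, ← hfk, mul_eq_inv_of_mul_pow_succ_div_two_eq_one hm hkm hz]
  apply inv_injective
  rw [← hinv, mul_inv_rev]
end

section
/- Let F be a finite field of characteristic 2, let a and b be two distinct points of the projective line ℙ¹(F), and let w ∈ SL₂(F) satisfy w•a = b and w•b = a. Then w² = 1. -/
/-! If `w` swaps the lines spanned by `u` and `v`, then `w u = c v` and `w v = d u`, so `w²`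
is the scalar `c d` on the basis `u, v`. Taking determinants, `(c d)² = 1`, and in
characteristic 2 this forces `c d = 1`. -/

open Matrix

namespace SL2ProjAction

variable {F : Type*} [Field F]

theorem toLin'_coe_injective (g : SpecialLinearGroup (Fin 2) F) :
    Function.Injective (Matrix.toLin' (g : Matrix (Fin 2) (Fin 2) F)) := by
  apply Function.LeftInverse.injective
    (g := Matrix.toLin' ((g⁻¹ : SpecialLinearGroup (Fin 2) F) : Matrix (Fin 2) (Fin 2) F))
  intro v
  rw [← Matrix.toLin'_mul_apply, ← Matrix.SpecialLinearGroup.coe_mul, inv_mul_cancel,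
    Matrix.SpecialLinearGroup.coe_one, Matrix.toLin'_one, LinearMap.id_apply]

/-- The natural action of `SL₂(F)` on the projective line `ℙ¹(F)`, induced by the linear
action of `SL₂(F)` on `F²`. -/
noncomputable instance : MulAction (SpecialLinearGroup (Fin 2) F)
    (Projectivization F (Fin 2 → F)) where
  smul g p := Projectivization.map (Matrix.toLin' (g : Matrix (Fin 2) (Fin 2) F))
    (toLin'_coe_injective g) p
  one_smul p := by
    show Projectivization.map _ _ p = p
    induction p using Projectivization.ind with
    | h v hv =>
      rw [Projectivization.map_mk]
      congr 1
      simp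
  mul_smul g h p := by
    show Projectivization.map _ _ p = Projectivization.map _ _ (Projectivization.map _ _ p)
    induction p using Projectivization.ind with
    | h v hv =>
      rw [Projectivization.map_mk, Projectivization.map_mk, Projectivization.map_mk]
      congr 1
      simp [Matrix.SpecialLinearGroup.coe_mul, Matrix.toLin'_mul]

end SL2ProjAction


namespace Projectivization

open scoped LinearAlgebra.Projectivization

variable {K V : Type*} [Field K] [AddCommGroup V] [Module K V]

theorem exists_smul_rep_eq_of_map_eq {f : V →ₗ[K] V} (hf : Function.Injective f) {a b : ℙ K V}
    (h : map f hf a = b) : ∃ c : K, c • b.rep = f a.rep := by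
  rw [← mk_rep a, map_mk] at h
  conv_rhs at h => rw [← mk_rep b]
  exact (mk_eq_mk_iff' K _ _ _ _).1 h

theorem exists_comp_self_eq_smul_id_of_map_swap (hV : Module.finrank K V = 2)
    {f : V →ₗ[K] V} (hf : Function.Injective f) {a b : ℙ K V} (hab : a ≠ b)
    (hfa : map f hf a = b) (hfb : map f hf b = a) :
    ∃ e : K, f ∘ₗ f = e • LinearMap.id := by
  obtain ⟨c, hc⟩ := exists_smul_rep_eq_of_map_eq hf hfa
  obtain ⟨d, hd⟩ := exists_smul_rep_eq_of_map_eq hf hfb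
  have hli : LinearIndependent K ![a.rep, b.rep] := linearIndependent_pair_iff_ne.2 hab
  have hcard : Fintype.card (Fin 2) = Module.finrank K V := by simp [hV]
  let B := basisOfLinearIndependentOfCardEqFinrank hli hcard
  have hB : ⇑B = ![a.rep, b.rep] := coe_basisOfLinearIndependentOfCardEqFinrank hli hcard
  refine ⟨c * d, B.ext fun i => ?_⟩
  rw [LinearMap.comp_apply, LinearMap.smul_apply, LinearMap.id_apply, hB]
  fin_cases i
  · simp only [Fin.zero_eta, Matrix.cons_val_zero]
    rw [← hc, map_smul, ← hd, smul_smul]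
  · simp only [Fin.mk_one, Matrix.cons_val_one, Matrix.cons_val_fin_one]
    rw [← hd, map_smul, ← hc, smul_smul, mul_comm]

end Projectivization

theorem Matrix.SpecialLinearGroup.sq_eq_one_of_comp_self_eq_smul_id {F : Type*} [Field F]
    [CharP F 2] (w : SpecialLinearGroup (Fin 2) F) {e : F}
    (hw : Matrix.toLin' (w : Matrix (Fin 2) (Fin 2) F) ∘ₗ
      Matrix.toLin' (w : Matrix (Fin 2) (Fin 2) F) = e • LinearMap.id) :
    w ^ 2 = 1 := by
  have hsq : ((w ^ 2 : SpecialLinearGroup (Fin 2) F) : Matrix (Fin 2) (Fin 2) F) = e • 1 := by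
    apply Matrix.toLin'.injective
    rw [pow_two, coe_mul, Matrix.toLin'_mul, hw, map_smul, Matrix.toLin'_one]
  have he : e = 1 := by
    have hdet := congrArg Matrix.det hsq
    rw [det_coe, det_smul, det_one, Fintype.card_fin, mul_one, eq_comm,
      ← one_pow 2, CharTwo.sq_inj] at hdet
    exact hdet
  ext : 1
  rw [hsq, he, one_smul, coe_one]

theorem swap_two_points_involution_char_two_general {F : Type*} [Field F] [CharP F 2]
    (a b : Projectivization F (Fin 2 → F)) (hab : a ≠ b)
    (w : SpecialLinearGroup (Fin 2) F) (hwa : w • a = b) (hwb : w • b = a) :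
    w ^ 2 = 1 := by
  obtain ⟨e, he⟩ := Projectivization.exists_comp_self_eq_smul_id_of_map_swap
    (Module.finrank_fin_fun F) (SL2ProjAction.toLin'_coe_injective w) hab hwa hwb
  exact w.sq_eq_one_of_comp_self_eq_smul_id he

/-- Over a finite field `F` of characteristic 2, any element of `SL₂(F)` that swaps two
distinct points of the projective line is an involution. -/
theorem swap_two_points_involution_char_two {F : Type*} [Field F] [Fintype F] [CharP F 2]
    (a b : Projectivization F (Fin 2 → F)) (hab : a ≠ b)
    (w : SpecialLinearGroup (Fin 2) F) (hwa : w • a = b) (hwb : w • b = a) :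
    w ^ 2 = 1 :=
  swap_two_points_involution_char_two_general a b hab w hwa hwb
end

section
/- Let F be a finite field of odd cardinality and let n ≥ 3. Then the inverse-transpose map x ↦ (xᵀ)⁻¹ on SLₙ(F) is not an inner automorphism: there exists no g ∈ GLₙ(F) such that (xᵀ)⁻¹ = g⁻¹ x g for all x ∈ SLₙ(F). -/
/-!
If `g` conjugated every `x ∈ SLₙ` to `(xᵀ)⁻¹`, then it would carry the transvection `1 + E_ij`
to `1 - E_ji`, i.e. `g (1 - E_ji) = (1 + E_ij) g`. Comparing the entries in column `i` outside
row `i` shows that column `j` of `g` vanishes outside row `i`. With at least three indices,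
two different choices of `i` kill all of column `j`, so `det g = 0`.
-/

open Matrix

namespace Matrix

variable {n R : Type*} [DecidableEq n] [CommRing R]

theorem transvection_transpose (i j : n) (c : R) : (transvection i j c)ᵀ = transvection j i c := by
  ext a b
  simp [transvection, single, one_apply, and_comm, eq_comm]

theorem inv_transvection_transpose [Fintype n] {i j : n} (h : i ≠ j) (c : R) :
    (transvection i j c)ᵀ⁻¹ = transvection j i (-c) := by
  apply inv_eq_right_inv
  rw [transvection_transpose, transvection_mul_transvection_same _ _ h.symm, add_neg_cancel,
    transvection_zero]

theorem apply_eq_zero_of_mul_transvection_eq [Fintype n] {G : Matrix n n R} {i j k : n}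
    (hk : k ≠ i) (h : G * transvection j i (-1) = transvection i j 1 * G) : G k j = 0 := by
  have hki := congrFun (congrFun h k) i
  rw [mul_transvection_apply_same, transvection_mul_apply_of_ne _ _ _ _ hk] at hki
  linear_combination -hki

variable [Fintype n]

theorem mul_transvection_eq_of_conj_eq_inv_transpose {g : GL n R}
    (hg : ∀ x : SpecialLinearGroup n R,
      (x : Matrix n n R)ᵀ⁻¹ = (↑g⁻¹ : Matrix n n R) * (x : Matrix n n R) * (g : Matrix n n R))
    {i j : n} (hij : i ≠ j) :
    (g : Matrix n n R) * transvection j i (-1) = transvection i j 1 * (g : Matrix n n R) := by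
  have hx := hg ⟨transvection i j 1, det_transvection_of_ne i j hij 1⟩
  rw [SpecialLinearGroup.coe_mk, inv_transvection_transpose hij] at hx
  rw [hx, Matrix.mul_assoc, Units.mul_inv_cancel_left]

theorem not_exists_conj_eq_inv_transpose [Nontrivial R] (hn : 3 ≤ Fintype.card n) :
    ¬∃ g : GL n R, ∀ x : SpecialLinearGroup n R,
      (x : Matrix n n R)ᵀ⁻¹ = (↑g⁻¹ : Matrix n n R) * (x : Matrix n n R) * (g : Matrix n n R) := by
  rintro ⟨g, hg⟩
  have hcard : 3 ≤ ENat.card n := by simpa using hn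
  obtain ⟨j⟩ : Nonempty n := Fintype.card_pos_iff.mp (by omega)
  have hcol : ∀ k, (g : Matrix n n R) k j = 0 := fun k ↦ by
    obtain ⟨i, hik, hij⟩ := ENat.exists_ne_ne_of_three_le hcard k j
    exact apply_eq_zero_of_mul_transvection_eq hik.symm
      (mul_transvection_eq_of_conj_eq_inv_transpose hg hij)
  have hdet := (isUnit_iff_isUnit_det _).mp g.isUnit
  rw [det_eq_zero_of_column_eq_zero j hcol] at hdet
  exact not_isUnit_zero hdet

end Matrix

theorem inverse_transpose_not_inner_general {F : Type*} [Field F]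
    (n : ℕ) (hn : 3 ≤ n) :
    ¬∃ g : GL (Fin n) F, ∀ x : SpecialLinearGroup (Fin n) F,
      ((x : Matrix (Fin n) (Fin n) F)ᵀ)⁻¹ =
        ((g⁻¹ : GL (Fin n) F) : Matrix (Fin n) (Fin n) F) *
          (x : Matrix (Fin n) (Fin n) F) * (g : Matrix (Fin n) (Fin n) F) :=
  not_exists_conj_eq_inv_transpose (by simpa using hn)

/-- Over a finite field `F` of odd cardinality and for `n ≥ 3`, the inverse-transpose map
`x ↦ (xᵀ)⁻¹` on `SLₙ(F)` is not an inner automorphism: no `g ∈ GLₙ(F)` conjugates every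
element of `SLₙ(F)` to its inverse-transpose. -/
theorem inverse_transpose_not_inner {F : Type*} [Field F] [Fintype F]
    (hodd : Odd (Fintype.card F)) (n : ℕ) (hn : 3 ≤ n) :
    ¬∃ g : GL (Fin n) F, ∀ x : SpecialLinearGroup (Fin n) F,
      ((x : Matrix (Fin n) (Fin n) F)ᵀ)⁻¹ =
        ((g⁻¹ : GL (Fin n) F) : Matrix (Fin n) (Fin n) F) *
          (x : Matrix (Fin n) (Fin n) F) * (g : Matrix (Fin n) (Fin n) F) :=
  inverse_transpose_not_inner_general n hn
end

section
/- Let F be a finite field with q elements where q is even (characteristic 2). Then every element x of SL₂(F) has order dividing 2, or order dividing q − 1, or order dividing q + 1. -/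
/-!
By Cayley–Hamilton, `x ^ n = 1` as soon as the characteristic polynomial `X² - t X + 1` of `x`
divides `X ^ n - 1`. In characteristic 2 this polynomial is `X² - 1` when `t = 0`. Otherwise its
roots `a` and `b = a⁻¹` in an algebraic closure are distinct, and the `q`-power Frobenius
permutes them: `a ^ q = a` gives `a ^ (q - 1) = 1`, while `a ^ q = b` gives `a ^ (q + 1) = a b = 1`.
-/

open Matrix Polynomial

theorem Polynomial.X_sub_C_mul_X_sub_C_dvd_X_pow_sub_one {K : Type*} [Field K] {a b : K}
    (hab : a ≠ b) {n : ℕ} (ha : a ^ n = 1) (hb : b ^ n = 1) :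
    (X - C a) * (X - C b) ∣ X ^ n - 1 :=
  (isCoprime_X_sub_C_of_isUnit_sub (sub_ne_zero.mpr hab).isUnit).mul_dvd
    (dvd_iff_isRoot.mpr (by simp [ha])) (dvd_iff_isRoot.mpr (by simp [hb]))

theorem Polynomial.dvd_X_pow_sub_one_of_map_eq_mul {F K : Type*} [Field F] [Field K]
    {φ : F →+* K} {P : F[X]} {a b : K} (hP : P.map φ = (X - C a) * (X - C b)) (hne : a ≠ b)
    (hab : a * b = 1) {n : ℕ} (ha : a ^ n = 1) : P ∣ X ^ n - 1 := by
  have hb : b ^ n = 1 := by rw [← one_pow n, ← hab, mul_pow, ha, one_mul]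
  rw [← map_dvd_map' φ, hP, Polynomial.map_sub, Polynomial.map_pow, map_X, Polynomial.map_one]
  exact X_sub_C_mul_X_sub_C_dvd_X_pow_sub_one hne ha hb

theorem Polynomial.exists_map_X_sq_sub_C_mul_X_add_one_eq {F K : Type*} [Field F] [Field K]
    [IsAlgClosed K] (φ : F →+* K) (t : F) :
    ∃ a b : K, a + b = φ t ∧ a * b = 1 ∧
      (X ^ 2 - C t * X + 1 : F[X]).map φ = (X - C a) * (X - C b) := by
  have hdeg : ((X ^ 2 - C t * X + 1 : F[X]).map φ).degree ≠ 0 := by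
    have : (X ^ 2 - C t * X + 1 : F[X]).degree = 2 := by compute_degree!
    rw [degree_map, this]
    decide
  obtain ⟨a, ha⟩ := IsAlgClosed.exists_root _ hdeg
  have hroot : a ^ 2 - φ t * a + 1 = 0 := by simpa [IsRoot] using ha
  have hsum : a + (φ t - a) = φ t := add_sub_cancel a (φ t)
  have hprod : a * (φ t - a) = 1 := by linear_combination -hroot
  refine ⟨a, φ t - a, hsum, hprod, ?_⟩
  simp only [Polynomial.map_add, Polynomial.map_sub, Polynomial.map_mul, Polynomial.map_pow,
    map_X, map_C, Polynomial.map_one]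
  have hC : C a ^ 2 - C (φ t) * C a + 1 = 0 := by
    rw [← C_pow, ← C_mul, ← C_sub, ← C_1, ← C_add, hroot, C_0]
  rw [C_sub]
  linear_combination hC

theorem FiniteField.eval_pow_card_map {F K : Type*} [Field F] [Fintype F] [CommRing K]
    (φ : F →+* K) (f : F[X]) (x : K) :
    eval (x ^ Fintype.card F) (f.map φ) = eval x (f.map φ) ^ Fintype.card F := by
  rw [← expand_eval, ← map_expand, FiniteField.expand_card, Polynomial.map_pow, eval_pow]

theorem FiniteField.X_sq_sub_C_mul_X_add_one_dvd {F : Type*} [Field F] [Fintype F] {t : F}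
    (ht : t ^ 2 ≠ 4) :
    X ^ 2 - C t * X + 1 ∣ X ^ (Fintype.card F - 1) - 1 ∨
      X ^ 2 - C t * X + 1 ∣ X ^ (Fintype.card F + 1) - 1 := by
  let φ := algebraMap F (AlgebraicClosure F)
  obtain ⟨a, b, hsum, hab, hP⟩ := exists_map_X_sq_sub_C_mul_X_add_one_eq φ t
  have hne : a ≠ b := by
    rintro rfl
    apply ht
    apply φ.injective
    rw [map_pow, map_ofNat, ← hsum]
    linear_combination 4 * hab
  have hfrob : a ^ Fintype.card F = a ∨ a ^ Fintype.card F = b := by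
    have : ((X ^ 2 - C t * X + 1 : F[X]).map φ).IsRoot (a ^ Fintype.card F) := by
      rw [IsRoot, eval_pow_card_map, hP]
      simp
    simpa [hP, sub_eq_zero] using this
  rcases hfrob with hfix | hswap
  · left
    refine dvd_X_pow_sub_one_of_map_eq_mul hP hne hab ?_
    rw [← mul_left_inj' (left_ne_zero_of_mul_eq_one hab), ← pow_succ,
      Nat.sub_add_cancel Fintype.card_pos, hfix, one_mul]
  · right
    refine dvd_X_pow_sub_one_of_map_eq_mul hP hne hab ?_
    rw [pow_succ, hswap, mul_comm, hab]

namespace Matrix.SpecialLinearGroup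

theorem orderOf_dvd_of_charpoly_dvd {n R : Type*} [Fintype n] [DecidableEq n] [CommRing R]
    (x : SpecialLinearGroup n R) {k : ℕ} (h : (x : Matrix n n R).charpoly ∣ X ^ k - 1) :
    orderOf x ∣ k := by
  obtain ⟨g, hg⟩ := h
  have hk : (x : Matrix n n R) ^ k - 1 = 0 := by
    simpa [aeval_self_charpoly] using congrArg (aeval (x : Matrix n n R)) hg
  rw [orderOf_dvd_iff_pow_eq_one]
  refine Subtype.ext ?_
  simpa [sub_eq_zero] using hk

variable {R : Type*} [CommRing R] [Nontrivial R]

theorem charpoly_fin_two (x : SpecialLinearGroup (Fin 2) R) :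
    (x : Matrix (Fin 2) (Fin 2) R).charpoly =
      X ^ 2 - C (x : Matrix (Fin 2) (Fin 2) R).trace * X + 1 := by
  rw [Matrix.charpoly_fin_two, x.det_coe, C_1]

theorem orderOf_dvd_two_of_trace_eq_zero [CharP R 2] (x : SpecialLinearGroup (Fin 2) R)
    (ht : (x : Matrix (Fin 2) (Fin 2) R).trace = 0) : orderOf x ∣ 2 := by
  apply orderOf_dvd_of_charpoly_dvd
  rw [charpoly_fin_two, ht, C_0, zero_mul, sub_zero, CharTwo.sub_eq_add]

theorem orderOf_dvd_card_sub_one_or_dvd_card_add_one {F : Type*} [Field F] [Fintype F]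
    (x : SpecialLinearGroup (Fin 2) F) (ht : (x : Matrix (Fin 2) (Fin 2) F).trace ^ 2 ≠ 4) :
    orderOf x ∣ Fintype.card F - 1 ∨ orderOf x ∣ Fintype.card F + 1 := by
  have hdvd := FiniteField.X_sq_sub_C_mul_X_add_one_dvd ht
  rw [← charpoly_fin_two] at hdvd
  exact hdvd.imp (orderOf_dvd_of_charpoly_dvd x) (orderOf_dvd_of_charpoly_dvd x)

end Matrix.SpecialLinearGroup

/-- Over a finite field `F` with `q` elements where `q` is even (characteristic 2), every
element of `SL₂(F)` has order dividing `2`, or dividing `q - 1`, or dividing `q + 1`. -/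
theorem sl2_element_orders_char_two {F : Type*} [Field F] [Fintype F]
    (hq : Even (Fintype.card F)) (x : SpecialLinearGroup (Fin 2) F) :
    orderOf x ∣ 2 ∨ orderOf x ∣ Fintype.card F - 1 ∨ orderOf x ∣ Fintype.card F + 1 := by
  have : CharP F 2 := ringChar.of_eq (FiniteField.even_card_iff_char_two.mpr (Nat.even_iff.mp hq))
  by_cases ht : (x : Matrix (Fin 2) (Fin 2) F).trace = 0
  · exact Or.inl (SpecialLinearGroup.orderOf_dvd_two_of_trace_eq_zero x ht)
  · refine Or.inr (SpecialLinearGroup.orderOf_dvd_card_sub_one_or_dvd_card_add_one x ?_)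
    have h4 : (4 : F) = 0 := by
      rw [show (4 : F) = 2 * 2 by norm_num, CharTwo.two_eq_zero, zero_mul]
    exact h4 ▸ pow_ne_zero 2 ht
end
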